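/- arXiv:2503.07379 — 2 statements merged into one kernel-verified Lean document; each statement's English description precedes it below -/
import Mathlib

section
/- Let α : ℕ^r → ℕ^s be a homomorphism of free commutative monoids which induces an isomorphism ℕ^r / α⁻¹(0) ≅ ℕ^s (in particular α is surjective and its 'kernel face' α⁻¹(0) has quotient exactly ℕ^s). Then there exist a basis p_1, …, p_r of ℕ^r and a basis q_1, …, q_s of ℕ^s such that α(p_i) = q_i for 1 ≤ i ≤ s and α(p_i) = 0 for s + 1 ≤ i ≤ r. In particular r ≥ s, α⁻¹(0) is freely generated by p_{s+1}, …, p_r, and α is, up to permutation of coordinates, the projection onto the first s coordinates. -/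
open Finset

private lemma apply_eq_sum (r s : ℕ) (α : (Fin r → ℕ) →+ (Fin s → ℕ)) (x : Fin r → ℕ)
    (m : Fin s) : α x m = ∑ k, x k * α (Pi.single k 1) m := by
  conv_lhs => rw [← Finset.univ_sum_single x]
  rw [map_sum, Finset.sum_apply]
  refine Finset.sum_congr rfl fun k _ => ?_
  have h : (Pi.single k (x k) : Fin r → ℕ) = x k • Pi.single k 1 := by
    rw [← Pi.single_smul, smul_eq_mul, mul_one]
  rw [h, map_nsmul]
  simp [smul_eq_mul]

private lemma ker_support (r s : ℕ) (α : (Fin r → ℕ) →+ (Fin s → ℕ)) (u : Fin r → ℕ)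
    (hu : α u = 0) (k : Fin r) (hk : α (Pi.single k 1) ≠ 0) : u k = 0 := by
  obtain ⟨m, hm⟩ := Function.ne_iff.mp hk
  have h0 : α u m = 0 := by rw [hu]; rfl
  rw [apply_eq_sum] at h0
  have h := (Finset.sum_eq_zero_iff.mp h0) k (mem_univ k)
  rcases Nat.mul_eq_zero.mp h with h | h
  · exact h
  · exact absurd h (by simpa using hm)

private lemma exists_single (r s : ℕ) (α : (Fin r → ℕ) →+ (Fin s → ℕ))
    (hsurj : Function.Surjective α) (j : Fin s) :
    ∃ i, α (Pi.single i 1) = Pi.single j 1 := by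
  obtain ⟨x, hx⟩ := hsurj (Pi.single j 1)
  have hj : ∑ k, x k * α (Pi.single k 1) j = 1 := by
    rw [← apply_eq_sum, hx, Pi.single_eq_same]
  obtain ⟨i, -, hi⟩ := Finset.exists_ne_zero_of_sum_ne_zero (s := Finset.univ)
    (f := fun k => x k * α (Pi.single k 1) j) (by rw [hj]; exact one_ne_zero)
  have hle := Finset.single_le_sum (f := fun k => x k * α (Pi.single k 1) j)
    (fun k _ => Nat.zero_le _) (mem_univ i)
  rw [hj] at hle
  have h1 : x i * α (Pi.single i 1) j = 1 := le_antisymm hle (Nat.one_le_iff_ne_zero.mpr hi)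
  have hxi : x i = 1 := Nat.eq_one_of_mul_eq_one_right h1
  have hci : α (Pi.single i 1) j = 1 := Nat.eq_one_of_mul_eq_one_left h1
  refine ⟨i, funext fun m => ?_⟩
  by_cases hm : m = j
  · subst hm; rw [Pi.single_eq_same]; exact hci
  · rw [Pi.single_eq_of_ne hm]
    have h0 : ∑ k, x k * α (Pi.single k 1) m = 0 := by
      rw [← apply_eq_sum, hx, Pi.single_eq_of_ne hm]
    have h := Finset.sum_eq_zero_iff.mp h0 i (mem_univ i)
    rcases Nat.mul_eq_zero.mp h with h | h
    · omega
    · exact h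

private lemma single_eq_zero (r s : ℕ) (α : (Fin r → ℕ) →+ (Fin s → ℕ))
    (hquot : ∀ x y : Fin r → ℕ, α x = α y →
      ∃ u v : Fin r → ℕ, α u = 0 ∧ α v = 0 ∧ x + u = y + v)
    (f : Fin s → Fin r)
    (hf : ∀ j, α (Pi.single (f j) 1) = Pi.single j 1) (i : Fin r) (hi : ∀ j, f j ≠ i) :
    α (Pi.single i 1) = 0 := by
  by_contra hw
  set w := α (Pi.single i 1) with hwdef
  set y : Fin r → ℕ := ∑ j, Pi.single (f j) (w j) with hy
  have hαy : α y = w := by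
    rw [hy, map_sum]
    have h : ∀ j : Fin s, α (Pi.single (f j) (w j)) = Pi.single j (w j) := by
      intro j
      have h2 : (Pi.single (f j) (w j) : Fin r → ℕ) = w j • Pi.single (f j) 1 := by
        rw [← Pi.single_smul, smul_eq_mul, mul_one]
      rw [h2, map_nsmul, hf j, ← Pi.single_smul, smul_eq_mul, mul_one]
    simp_rw [h]
    exact Finset.univ_sum_single w
  obtain ⟨u, v, hu, hv, heq⟩ := hquot (Pi.single i 1) y (by rw [hαy])
  have hui : u i = 0 := ker_support r s α u hu i hw
  have hvi : v i = 0 := ker_support r s α v hv i hw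
  have hc := congrFun heq i
  simp only [Pi.add_apply, Pi.single_eq_same, hui, hvi, add_zero] at hc
  have hyi : y i = ∑ j, if i = f j then w j else 0 := by
    rw [hy, Finset.sum_apply]
    exact Finset.sum_congr rfl fun j _ => Pi.single_apply (f j) (w j) i
  rw [hyi] at hc
  obtain ⟨j, -, hj⟩ := Finset.exists_ne_zero_of_sum_ne_zero (s := Finset.univ)
    (f := fun j => if i = f j then w j else 0) (by rw [← hc]; exact one_ne_zero)
  by_cases h : i = f j
  · exact hi j h.symm
  · rw [if_neg h] at hj; exact hj rfl

/-- Let `α : ℕ^r → ℕ^s` be a homomorphism of free commutative monoids inducing an isomorphism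
`ℕ^r / α⁻¹(0) ≅ ℕ^s`: concretely, `α` is surjective and whenever `α x = α y` there exist
`u, v ∈ α⁻¹(0)` with `x + u = y + v`.  Then there are bases `p₁, …, p_r` of `ℕ^r` and
`q₁, …, q_s` of `ℕ^s` (i.e. permutations of the standard bases) with `α pᵢ = qᵢ` for
`1 ≤ i ≤ s` and `α pᵢ = 0` for `s + 1 ≤ i ≤ r`; in particular `s ≤ r`. -/
theorem free_monoid_to_free_monoid (r s : ℕ) (α : (Fin r → ℕ) →+ (Fin s → ℕ))
    (hsurj : Function.Surjective α)
    (hquot : ∀ x y : Fin r → ℕ, α x = α y →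
      ∃ u v : Fin r → ℕ, α u = 0 ∧ α v = 0 ∧ x + u = y + v) :
    ∃ (hrs : s ≤ r) (σ : Equiv.Perm (Fin r)) (τ : Equiv.Perm (Fin s)),
      (∀ i : Fin s, α (Pi.single (σ (Fin.castLE hrs i)) 1) = Pi.single (τ i) 1) ∧
      (∀ i : Fin r, s ≤ (i : ℕ) → α (Pi.single (σ i) 1) = 0) := by
  classical
  choose f hf using fun j => exists_single r s α hsurj j
  have finj : Function.Injective f := by
    intro j j' h
    have h2 : (Pi.single j 1 : Fin s → ℕ) = Pi.single j' 1 := by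
      rw [← hf j, ← hf j', h]
    by_contra hne
    have := congrFun h2 j
    rw [Pi.single_eq_same, Pi.single_eq_of_ne hne] at this
    exact one_ne_zero this
  have hrs : s ≤ r := by simpa using Fintype.card_le_of_injective f finj
  let e1 : {i : Fin r // (i : ℕ) < s} ≃ Fin s :=
    { toFun := fun x => ⟨x.1, x.2⟩
      invFun := fun j => ⟨Fin.castLE hrs j, j.2⟩
      left_inv := fun x => rfl
      right_inv := fun j => rfl }
  let e2 : Fin s ≃ {i : Fin r // ∃ j, f j = i} :=
    (Equiv.ofInjective f finj).trans (Equiv.subtypeEquivRight (fun x => Iff.rfl))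
  let e := e1.trans e2
  refine ⟨hrs, e.extendSubtype, Equiv.refl _, ?_, ?_⟩
  · intro i
    have hp : ((Fin.castLE hrs i : Fin r) : ℕ) < s := i.2
    rw [Equiv.extendSubtype_apply_of_mem e _ hp]
    have h3 : (e ⟨Fin.castLE hrs i, hp⟩ : Fin r) = f i := rfl
    rw [h3, hf, Equiv.refl_apply]
  · intro i hi
    have hp : ¬ ((i : Fin r) : ℕ) < s := not_lt.mpr hi
    have hq := Equiv.extendSubtype_not_mem e i hp
    exact single_eq_zero r s α hquot f hf _ (fun j h => hq ⟨j, h⟩)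
end

section
/- Let P be a fine saturated sharp monoid and f : P → Q a Kummer homomorphism into a saturated monoid Q. Then the map f^gp : P^gp → Q^gp is injective and, after tensoring with ℚ, induces a surjection P^gp ⊗_ℤ ℚ → Q^gp ⊗_ℤ ℚ onto the subgroup generated by Q; in particular, if Q is also finitely generated then P^gp and Q^gp have the same rank. -/
universe u

/-- Let `P` be a fine saturated sharp monoid and `f : P → Q` a Kummer homomorphism into a
saturated monoid `Q`.  The Grothendieck groups are encoded as abelian groups `GP`, `GQ` with
injective generating homomorphisms `ιP`, `ιQ`, and `F : GP →+ GQ` is the induced map on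
Grothendieck groups.  Then `F = f^gp` is injective and, after tensoring with `ℚ`, induces a
surjection onto the subgroup generated by `Q` (i.e. every `x ∈ GQ` has a positive multiple in
the image of `F`); in particular, if `Q` is also finitely generated then `P^gp` and `Q^gp`
have the same rank. -/
theorem kummer_gp_injective_and_rationally_surjective
    {P Q GP GQ : Type u} [AddCancelCommMonoid P] [AddCancelCommMonoid Q]
    [AddMonoid.FG P]
    [AddCommGroup GP] [AddCommGroup GQ]
    (ιP : P →+ GP) (ιQ : Q →+ GQ)
    (hιP : Function.Injective ιP) (hιQ : Function.Injective ιQ)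
    (hgenP : ∀ x : GP, ∃ a b : P, x = ιP a - ιP b)
    (hgenQ : ∀ x : GQ, ∃ a b : Q, x = ιQ a - ιQ b)
    (hsatP : ∀ (x : GP) (m : ℕ), 1 ≤ m → m • x ∈ Set.range ιP → x ∈ Set.range ιP)
    (hsatQ : ∀ (x : GQ) (m : ℕ), 1 ≤ m → m • x ∈ Set.range ιQ → x ∈ Set.range ιQ)
    (hsharp : ∀ a b : P, a + b = 0 → a = 0 ∧ b = 0)
    (f : P →+ Q) (F : GP →+ GQ) (hcomm : ∀ p : P, F (ιP p) = ιQ (f p))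
    (hfinj : Function.Injective f)
    (hkum : ∀ q : Q, ∃ (p : P) (m : ℕ), 1 ≤ m ∧ f p = m • q) :
    Function.Injective F ∧
    (∀ x : GQ, ∃ (y : GP) (n : ℕ), 1 ≤ n ∧ F y = n • x) ∧
    (AddMonoid.FG Q → Module.rank ℤ GP = Module.rank ℤ GQ) := by
  have hFinj : Function.Injective F := by
    intro x y hxy
    obtain ⟨a, b, rfl⟩ := hgenP x
    obtain ⟨c, d, rfl⟩ := hgenP y
    simp only [map_sub, hcomm] at hxy
    rw [sub_eq_sub_iff_add_eq_add] at hxy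
    have h1 : ιQ (f a) + ιQ (f d) = ιQ (f c) + ιQ (f b) := hxy
    rw [← map_add, ← map_add, ← map_add, ← map_add] at h1
    have h2 : a + d = c + b := hfinj (hιQ h1)
    have h3 : ιP a + ιP d = ιP c + ιP b := by rw [← map_add, ← map_add, h2]
    rw [sub_eq_sub_iff_add_eq_add]
    exact h3
  have hsurj : ∀ x : GQ, ∃ (y : GP) (n : ℕ), 1 ≤ n ∧ F y = n • x := by
    intro x
    obtain ⟨a, b, rfl⟩ := hgenQ x
    obtain ⟨p, m, hm, hp⟩ := hkum a
    obtain ⟨p', m', hm', hp'⟩ := hkum b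
    refine ⟨m' • ιP p - m • ιP p', m * m', Nat.one_le_iff_ne_zero.mpr (by positivity), ?_⟩
    simp only [map_sub, map_nsmul, hcomm, hp, hp', map_nsmul]
    rw [smul_sub, smul_smul, smul_smul, Nat.mul_comm m' m]
  refine ⟨hFinj, hsurj, fun _ => ?_⟩
  let F' : GP →ₗ[ℤ] GQ := F.toIntLinearMap
  have h1 : Module.rank ℤ (LinearMap.range F') = Module.rank ℤ GP :=
    rank_range_of_injective F' hFinj
  have h2 : Module.rank ℤ (GQ ⧸ LinearMap.range F') = 0 := by
    rw [rank_eq_zero_iff_isTorsion]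
    intro x
    obtain ⟨x, rfl⟩ := Submodule.mkQ_surjective _ x
    obtain ⟨y, n, hn, hy⟩ := hsurj x
    refine ⟨⟨(n : ℤ), mem_nonZeroDivisors_of_ne_zero (by exact_mod_cast Nat.one_le_iff_ne_zero.mp hn)⟩, ?_⟩
    rw [Submonoid.mk_smul, ← map_zsmul, Submodule.mkQ_apply, Submodule.Quotient.mk_eq_zero]
    exact ⟨y, by simpa [F', natCast_zsmul] using hy⟩
  have := rank_quotient_add_rank_of_isDomain (LinearMap.range F')
  rw [h2, zero_add, h1] at this
  exact this
end
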